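/- In $BS(2,2) = \langle a, t \mid t a^2 t^{-1} = a^2 \rangle$, the subgroup generated by $a^2$ and $t$ is free abelian of rank $2$ (isomorphic to $\mathbb{Z}^2$). -/
import Mathlib


/-- The relator set for `BS(2,2) = ⟨a, t ∣ t a² t⁻¹ = a²⟩`, with `a` indexed by `0`
and `t` indexed by `1`. -/
def bsRel22 : Set (FreeGroup (Fin 2)) :=
  {FreeGroup.of 1 * FreeGroup.of 0 ^ 2 * (FreeGroup.of 1)⁻¹ * (FreeGroup.of 0 ^ 2)⁻¹}

namespace BS22Aux

abbrev G := PresentedGroup bsRel22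

noncomputable def A : G := (PresentedGroup.of 0 : G) ^ 2
noncomputable def T : G := (PresentedGroup.of 1 : G)

lemma commAT : Commute A T := by
  have h : PresentedGroup.mk bsRel22
      (FreeGroup.of 1 * FreeGroup.of 0 ^ 2 * (FreeGroup.of 1)⁻¹ * (FreeGroup.of 0 ^ 2)⁻¹) = 1 := by
    apply (QuotientGroup.eq_one_iff _).2
    exact Subgroup.subset_normalClosure rfl
  have h' : T * A * T⁻¹ * A⁻¹ = 1 := by
    simpa [A, T, PresentedGroup.of, map_mul, map_inv, map_pow] using h
  exact (commutatorElement_eq_one_iff_commute.mp h').symm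

/-- hom from ℤ² into G sending (m, n) to A^m T^n. -/
noncomputable def ψ : Multiplicative (ℤ × ℤ) →* G where
  toFun x := A ^ (Multiplicative.toAdd x).1 * T ^ (Multiplicative.toAdd x).2
  map_one' := by simp
  map_mul' x y := by
    have hc : Commute (A ^ (Multiplicative.toAdd y).1) (T ^ (Multiplicative.toAdd x).2) :=
      (commAT.zpow_zpow _ _)
    simp only [toAdd_mul, Prod.fst_add, Prod.snd_add, zpow_add]
    rw [hc.symm.mul_mul_mul_comm]

/-- detecting hom to ℤ². -/
noncomputable def χ : G →* Multiplicative (ℤ × ℤ) :=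
  PresentedGroup.toGroup (f := fun i : Fin 2 =>
    if i = 0 then (Multiplicative.ofAdd ((1, 0) : ℤ × ℤ))
    else Multiplicative.ofAdd ((0, 1) : ℤ × ℤ))
    (by
      intro r hr
      rcases hr with rfl
      simp [mul_comm])

lemma χ_ψ (x : Multiplicative (ℤ × ℤ)) :
    χ (ψ x) = Multiplicative.ofAdd (2 * (Multiplicative.toAdd x).1, (Multiplicative.toAdd x).2) := by
  have hA : χ A = Multiplicative.ofAdd ((2, 0) : ℤ × ℤ) := by
    simp [A, χ, PresentedGroup.toGroup.of]
    rfl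
  have hT : χ T = Multiplicative.ofAdd ((0, 1) : ℤ × ℤ) := by
    simp [T, χ, PresentedGroup.toGroup.of]
  show χ (A ^ (Multiplicative.toAdd x).1 * T ^ (Multiplicative.toAdd x).2) = _
  rw [map_mul, map_zpow, map_zpow, hA, hT, ← ofAdd_zsmul, ← ofAdd_zsmul, ← ofAdd_add]
  congr 1
  simp [Prod.ext_iff, mul_comm]

lemma ψ_inj : Function.Injective ψ := by
  intro x y h
  have := congrArg χ h
  rw [χ_ψ, χ_ψ] at this
  have h2 := Multiplicative.ofAdd.injective this
  have h1 : (Multiplicative.toAdd x).1 = (Multiplicative.toAdd y).1 := by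
    have := congrArg Prod.fst h2; simpa using this
  have h2' : (Multiplicative.toAdd x).2 = (Multiplicative.toAdd y).2 := by
    simpa using congrArg Prod.snd h2
  have : Multiplicative.toAdd x = Multiplicative.toAdd y := Prod.ext h1 h2'
  exact Multiplicative.toAdd.injective this

lemma ψ_range : ψ.range = Subgroup.closure ({A, T} : Set G) := by
  apply le_antisymm
  · rintro _ ⟨x, rfl⟩
    have hA : A ∈ Subgroup.closure ({A, T} : Set G) :=
      Subgroup.subset_closure (by simp)
    have hT : T ∈ Subgroup.closure ({A, T} : Set G) :=
      Subgroup.subset_closure (by simp)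
    exact mul_mem (zpow_mem hA _) (zpow_mem hT _)
  · rw [Subgroup.closure_le]
    rintro x (rfl | rfl)
    · exact ⟨Multiplicative.ofAdd ((1, 0) : ℤ × ℤ), by
        show A ^ (1 : ℤ) * T ^ (0 : ℤ) = A; group⟩
    · exact ⟨Multiplicative.ofAdd ((0, 1) : ℤ × ℤ), by
        show A ^ (0 : ℤ) * T ^ (1 : ℤ) = T; group⟩

end BS22Aux

/-- In `BS(2,2)`, the subgroup generated by `a²` and `t` is free abelian of rank 2. -/
theorem bs22_closure_sq_t_free_abelian :
    Nonempty ((Subgroup.closure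
        ({(PresentedGroup.of 0 : PresentedGroup bsRel22) ^ 2,
          (PresentedGroup.of 1 : PresentedGroup bsRel22)} :
          Set (PresentedGroup bsRel22))) ≃* Multiplicative (ℤ × ℤ)) := by
  have e1 : Multiplicative (ℤ × ℤ) ≃* BS22Aux.ψ.range :=
    MonoidHom.ofInjective BS22Aux.ψ_inj
  have e2 : BS22Aux.ψ.range ≃*
      Subgroup.closure ({BS22Aux.A, BS22Aux.T} : Set BS22Aux.G) :=
    MulEquiv.subgroupCongr BS22Aux.ψ_range
  exact ⟨(e1.trans e2).symm⟩
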